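/- Let X be a finite set with |X| ≥ 3. If S is a commutative nilpotent subsemigroup of T(X) with |S| = ξ(|X|), then the zero of S is a constant map (rank 1), and there exist distinct elements x_1, ..., x_t ∈ X with t = α(|X|) such that S = {β ∈ T(X) : x_jβ = x_1 for all j ∈ {1,...,t} and im(β) ⊆ {x_1,...,x_t}}. -/

import Mathlib

/-!
Let `W` be the union of the images of the elements of `S`. If `β, γ ∈ S` agree off `W`, they
agree on the image of every product of `k` elements of `S`, by downward induction on `k`: when
`k` is the nilpotency index the product is the zero, and a point `δ z` of `W` moves into the image
of a longer product because `δ` commutes with everything. Hence restriction to `Wᶜ` embeds `S` into the maps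
`Wᶜ → W`, so `|S| ≤ |W| ^ (n - |W|) ≤ ξ(n)`.

At equality restriction is a bijection, and `|W| = α(n)` because `t ↦ t ^ (n - t)` is strictly
log-concave and takes distinct values at consecutive `t`, so it has a single maximiser. If two
points `y ≠ y'` lie outside `W`, let `η ∈ S` be constantly `u` on `Wᶜ` and `β ∈ S` send `y, y'`
to `a, b ∈ W`; then `η a = β u = η b`, so `η` is constant on `W`, and this forces the zero to be a
constant `c` and every element of `S` to send `W` to `c`. The only other case is `n = 3`,
`|W| = 2`, where an element fixing a point of `W` other than `c` would contradict nilpotency.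
-/

/-- `S` is a subsemigroup of the full transformation semigroup on `X`
(maps act on the right, so the product `β·γ` is `γ ∘ β`). -/
def IsTransSub {X : Type*} (S : Set (X → X)) : Prop :=
  ∀ β ∈ S, ∀ γ ∈ S, (γ ∘ β) ∈ S

/-- `e` is a zero element of `S`: `βe = eβ = e` for all `β ∈ S`. -/
def IsZeroElem {X : Type*} (S : Set (X → X)) (e : X → X) : Prop :=
  e ∈ S ∧ ∀ β ∈ S, e ∘ β = e ∧ β ∘ e = e

/-- `S` is nilpotent with zero `e`: some `m ≥ 1` such that every product of
`m` elements of `S` equals `e`. -/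
def IsNilpotentSub {X : Type*} (S : Set (X → X)) (e : X → X) : Prop :=
  ∃ m : ℕ, 0 < m ∧ ∀ L : List (X → X), L.length = m → (∀ f ∈ L, f ∈ S) →
    L.foldr (· ∘ ·) id = e

/-- `S` is commutative. -/
def IsCommSub {X : Type*} (S : Set (X → X)) : Prop :=
  ∀ β ∈ S, ∀ γ ∈ S, β ∘ γ = γ ∘ β

/-- `S` is a null semigroup with zero `e`: every product of two elements is `e`. -/
def IsNullSub {X : Type*} (S : Set (X → X)) (e : X → X) : Prop :=
  ∀ β ∈ S, ∀ γ ∈ S, γ ∘ β = e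

/-- `ξ(n) = max { t ^ (n - t) : 1 ≤ t ≤ n }`. -/
def xi (n : ℕ) : ℕ := (Finset.Icc 1 n).sup (fun t => t ^ (n - t))

/-- `α(n) = max { t ∈ {1,…,n} : t ^ (n - t) = ξ(n) }`. -/
def alphaMax (n : ℕ) : ℕ :=
  ((Finset.Icc 1 n).filter (fun t => t ^ (n - t) = xi n)).sup id

theorem pow_sub_mul_lt_sq {n t : ℕ} (ht : 1 ≤ t) (htn : t + 2 ≤ n) :
    t ^ (n - t) * (t + 2) ^ (n - (t + 2)) < ((t + 1) ^ (n - (t + 1))) ^ 2 := by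
  obtain ⟨a, rfl⟩ : ∃ a, n = t + 2 + a := ⟨n - (t + 2), by omega⟩
  have hsub₀ : t + 2 + a - t = a + 2 := by omega
  have hsub₁ : t + 2 + a - (t + 1) = a + 1 := by omega
  rw [hsub₀, hsub₁, Nat.add_sub_cancel_left]
  calc t ^ (a + 2) * (t + 2) ^ a = t ^ 2 * (t * (t + 2)) ^ a := by rw [mul_pow]; ring
    _ ≤ t ^ 2 * ((t + 1) ^ 2) ^ a := by gcongr; nlinarith
    _ < (t + 1) ^ 2 * ((t + 1) ^ 2) ^ a := by gcongr; omega
    _ = ((t + 1) ^ (a + 1)) ^ 2 := by rw [← pow_mul, ← pow_mul, ← pow_add]; ring_nf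

theorem pow_sub_add_two_lt {n t : ℕ} (ht : 1 ≤ t) (htn : t + 2 ≤ n)
    (hle : (t + 1) ^ (n - (t + 1)) ≤ t ^ (n - t)) :
    (t + 2) ^ (n - (t + 2)) < (t + 1) ^ (n - (t + 1)) := by
  have hpos : 0 < (t + 1) ^ (n - (t + 1)) := by positivity
  refine lt_of_mul_lt_mul_left ?_ hpos.le
  calc (t + 1) ^ (n - (t + 1)) * (t + 2) ^ (n - (t + 2))
      ≤ t ^ (n - t) * (t + 2) ^ (n - (t + 2)) := by gcongr
    _ < ((t + 1) ^ (n - (t + 1))) ^ 2 := pow_sub_mul_lt_sq ht htn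
    _ = _ := sq _

theorem strictAntiOn_pow_sub {n s : ℕ} (hs : 1 ≤ s)
    (hle : (s + 1) ^ (n - (s + 1)) ≤ s ^ (n - s)) :
    StrictAntiOn (fun t => t ^ (n - t)) (Set.Icc (s + 1) n) := by
  have hstep : ∀ a, s + 1 ≤ a → a + 1 ≤ n → (a + 1) ^ (n - (a + 1)) < a ^ (n - a) := by
    intro a ha
    induction a, ha using Nat.le_induction with
    | base => exact fun hsn => pow_sub_add_two_lt hs hsn hle
    | succ a hsa ih => exact fun han => pow_sub_add_two_lt (by omega) han (ih (by omega)).le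
  exact strictAntiOn_of_add_one_lt Set.ordConnected_Icc fun a _ ha ha' => hstep a ha.1 ha'.2

theorem pow_sub_ne_add_one_pow_sub {n t : ℕ} (hn : 3 ≤ n) (htn : t + 1 ≤ n) :
    t ^ (n - t) ≠ (t + 1) ^ (n - (t + 1)) := by
  intro h
  obtain ⟨k, rfl⟩ : ∃ k, n = t + 1 + k := ⟨n - (t + 1), by omega⟩
  rw [show t + 1 + k - t = k + 1 by omega, Nat.add_sub_cancel_left] at h
  have ht : t = 1 := by
    refine ((Nat.coprime_self_add_right.mpr (Nat.coprime_one_right t)).pow_right k).eq_one_of_dvd ?_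
    exact h ▸ dvd_pow_self t k.succ_ne_zero
  subst ht
  have : k = 0 := by simpa using h.symm
  omega

theorem pow_sub_le_xi {n t : ℕ} (ht : 1 ≤ t) (htn : t ≤ n) : t ^ (n - t) ≤ xi n :=
  Finset.le_sup (f := fun t => t ^ (n - t)) (Finset.mem_Icc.mpr ⟨ht, htn⟩)

theorem eq_of_pow_sub_eq_xi {n s t : ℕ} (hn : 3 ≤ n) (hs : 1 ≤ s) (htn : t ≤ n)
    (hst : s ≤ t) (hsξ : s ^ (n - s) = xi n) (htξ : t ^ (n - t) = xi n) : s = t := by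
  by_contra hne
  have hle : (s + 1) ^ (n - (s + 1)) ≤ s ^ (n - s) := hsξ ▸ pow_sub_le_xi (by omega) (by omega)
  rcases (show t = s + 1 ∨ s + 1 < t by omega) with rfl | hlt
  · exact pow_sub_ne_add_one_pow_sub hn htn (hsξ.trans htξ.symm)
  · have hdrop : t ^ (n - t) < (s + 1) ^ (n - (s + 1)) :=
      strictAntiOn_pow_sub hs hle ⟨le_rfl, by omega⟩ ⟨hlt.le, htn⟩ hlt
    exact (pow_sub_le_xi (by omega) (by omega)).not_gt (htξ ▸ hdrop)

theorem eq_alphaMax_of_pow_sub_eq_xi {n w : ℕ} (hn : 3 ≤ n) (hw : 1 ≤ w) (hwn : w ≤ n)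
    (hwξ : w ^ (n - w) = xi n) : w = alphaMax n := by
  have hmax : (Finset.Icc 1 n).filter (fun t => t ^ (n - t) = xi n) = {w} := by
    refine Finset.eq_singleton_iff_unique_mem.mpr ⟨by simp [*], fun t ht => ?_⟩
    simp only [Finset.mem_filter, Finset.mem_Icc] at ht
    rcases le_total w t with h | h
    · exact (eq_of_pow_sub_eq_xi hn hw ht.1.2 h hwξ ht.2).symm
    · exact eq_of_pow_sub_eq_xi hn ht.1.1 hwn h ht.2 hwξ
  rw [alphaMax, hmax, Finset.sup_singleton, id]

theorem two_le_sub_or_of_pow_sub_eq_xi {n w : ℕ} (hn : 3 ≤ n) (hwn : w ≤ n)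
    (hwξ : w ^ (n - w) = xi n) : 2 ≤ n - w ∨ n = 3 ∧ w = 2 := by
  obtain ⟨m, rfl⟩ : ∃ m, n = m + 3 := ⟨n - 3, by omega⟩
  have h₁ : m + 2 ≤ xi (m + 3) := by
    simpa using pow_sub_le_xi (n := m + 3) (t := m + 2) (by omega) (by omega)
  have h₂ : (m + 1) ^ 2 ≤ xi (m + 3) := by
    simpa [show m + 3 - (m + 1) = 2 by omega] using
      pow_sub_le_xi (n := m + 3) (t := m + 1) (by omega) (by omega)
  rw [← hwξ] at h₁ h₂
  rcases (show m + 3 - w = 0 ∨ m + 3 - w = 1 ∨ 2 ≤ m + 3 - w by omega) with h | h | h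
  · rw [h, pow_zero] at h₁
    omega
  · rw [h, pow_one] at h₂
    obtain rfl : w = m + 2 := by omega
    right
    constructor <;> nlinarith
  · exact Or.inl h

theorem Function.Commute.foldr_comp {X : Type*} {f : X → X} {L : List (X → X)}
    (h : ∀ g ∈ L, Function.Commute f g) : Function.Commute f (L.foldr (· ∘ ·) id) := by
  induction L with
  | nil => exact Function.Commute.id_right
  | cons g L ih =>
    obtain ⟨hg, hL⟩ := List.forall_mem_cons.mp h
    exact hg.comp_right (ih hL)

section TransformationSemigroup

variable {X : Type*} {S : Set (X → X)} {e β : X → X}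

def unionRange (S : Set (X → X)) : Set X := ⋃ β ∈ S, Set.range β

theorem mem_unionRange (hβ : β ∈ S) (x : X) : β x ∈ unionRange S :=
  Set.mem_biUnion hβ (Set.mem_range_self x)

theorem IsZeroElem.apply_apply (he : IsZeroElem S e) (hβ : β ∈ S) (x : X) : β (e x) = e x :=
  congrFun (he.2 β hβ).2 x

theorem IsNilpotentSub.exists_iterate_eq (hnil : IsNilpotentSub S e) :
    ∃ m, 0 < m ∧ ∀ β ∈ S, β^[m] = e := by
  obtain ⟨m, hm, hprod⟩ := hnil
  refine ⟨m, hm, fun β hβ => ?_⟩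
  have hfoldr : ∀ k, (List.replicate k β).foldr (· ∘ ·) id = β^[k] := by
    intro k
    induction k with
    | zero => rfl
    | succ k ih => rw [List.replicate_succ, List.foldr_cons, ih, Function.iterate_succ']
  rw [← hfoldr, hprod _ List.length_replicate fun f hf => List.eq_of_mem_replicate hf ▸ hβ]

theorem IsNilpotentSub.isFixedPt_of_isFixedPt (hnil : IsNilpotentSub S e) (hβ : β ∈ S) {u : X}
    (hu : Function.IsFixedPt β u) : Function.IsFixedPt e u := by
  obtain ⟨m, -, hiter⟩ := hnil.exists_iterate_eq
  rw [← hiter β hβ]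
  exact hu.iterate m

theorem IsNilpotentSub.eq_of_idempotent (hnil : IsNilpotentSub S e) (hβ : β ∈ S)
    (hidem : ∀ x, β (β x) = β x) : β = e := by
  obtain ⟨m, hm, hiter⟩ := hnil.exists_iterate_eq
  obtain ⟨k, rfl⟩ : ∃ k, m = k + 1 := ⟨m - 1, by omega⟩
  funext x
  rw [← hiter β hβ, Function.iterate_succ_apply, Function.iterate_fixed (hidem x)]

theorem eq_of_eqOn_compl_unionRange (hcomm : IsCommSub S) (he : IsZeroElem S e)
    (hnil : IsNilpotentSub S e) {γ : X → X} (hβ : β ∈ S) (hγ : γ ∈ S)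
    (h : Set.EqOn β γ (unionRange S)ᶜ) : β = γ := by
  obtain ⟨m, -, hprod⟩ := hnil
  have hcommute : ∀ σ ∈ S, ∀ L : List (X → X), (∀ f ∈ L, f ∈ S) →
      Function.Commute σ (L.foldr (· ∘ ·) id) := fun σ hσ L hL =>
    Function.Commute.foldr_comp fun f hf => congrFun (hcomm σ hσ f (hL f hf))
  suffices key : ∀ k (L : List (X → X)), L.length + k = m → (∀ f ∈ L, f ∈ S) →
      β ∘ L.foldr (· ∘ ·) id = γ ∘ L.foldr (· ∘ ·) id from
    key m [] (zero_add m) (by simp)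
  intro k
  induction k with
  | zero =>
    intro L hL hLS
    rw [hprod L hL hLS, (he.2 β hβ).2, (he.2 γ hγ).2]
  | succ k ih =>
    intro L hL hLS
    funext y
    by_cases hy : y ∈ unionRange S
    · obtain ⟨δ, hδ, z, rfl⟩ := Set.mem_iUnion₂.mp hy
      have := congrFun (ih (δ :: L) (by simp only [List.length_cons]; omega)
        (List.forall_mem_cons.mpr ⟨hδ, hLS⟩)) z
      simpa only [Function.comp_apply, List.foldr_cons, hcommute δ hδ L hLS z] using this
    · simp only [Function.comp_apply]
      rw [hcommute β hβ L hLS y, hcommute γ hγ L hLS y, h hy]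

end TransformationSemigroup

section Restriction

variable {X : Type*} {S : Set (X → X)} {W : Set X}

def restrictCompl (hmaps : ∀ β ∈ S, ∀ x, β x ∈ W) : S → (↥Wᶜ → W) :=
  fun β z => ⟨β.1 z, hmaps β.1 β.2 z⟩

theorem restrictCompl_injective (hmaps : ∀ β ∈ S, ∀ x, β x ∈ W)
    (hdet : ∀ β ∈ S, ∀ γ ∈ S, Set.EqOn β γ Wᶜ → β = γ) :
    Function.Injective (restrictCompl hmaps) := fun β γ h =>
  Subtype.ext (hdet β β.2 γ γ.2 fun z hz => congrArg Subtype.val (congrFun h ⟨z, hz⟩))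

theorem natCard_compl_fun [Finite X] (W : Set X) :
    Nat.card (↥Wᶜ → W) = W.ncard ^ (Nat.card X - W.ncard) := by
  rw [Nat.card_fun, Nat.card_coe_set_eq, Nat.card_coe_set_eq, Set.ncard_compl]

theorem ncard_le_pow_of_eqOn_compl [Finite X] (hmaps : ∀ β ∈ S, ∀ x, β x ∈ W)
    (hdet : ∀ β ∈ S, ∀ γ ∈ S, Set.EqOn β γ Wᶜ → β = γ) :
    S.ncard ≤ W.ncard ^ (Nat.card X - W.ncard) := by
  rw [← Nat.card_coe_set_eq, ← natCard_compl_fun]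
  exact Nat.card_le_card_of_injective _ (restrictCompl_injective hmaps hdet)

theorem exists_mem_eqOn_compl [Finite X] (hmaps : ∀ β ∈ S, ∀ x, β x ∈ W)
    (hdet : ∀ β ∈ S, ∀ γ ∈ S, Set.EqOn β γ Wᶜ → β = γ)
    (hcard : S.ncard = W.ncard ^ (Nat.card X - W.ncard)) (f : X → X) (hf : ∀ z ∉ W, f z ∈ W) :
    ∃ β ∈ S, Set.EqOn β f Wᶜ := by
  have hbij : Function.Bijective (restrictCompl hmaps) :=
    (Nat.bijective_iff_injective_and_card _).mpr ⟨restrictCompl_injective hmaps hdet, by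
      rw [Nat.card_coe_set_eq, hcard, natCard_compl_fun]⟩
  obtain ⟨β, hβ⟩ := hbij.2 fun z => ⟨f z, hf z z.2⟩
  exact ⟨β, β.2, fun z hz => congrArg Subtype.val (congrFun hβ ⟨z, hz⟩)⟩

end Restriction

theorem exists_injective_fin_range_eq {X : Type*} {W : Set X} [Finite W] {t : ℕ}
    (ht : W.ncard = t) {c : X} (hc : c ∈ W) :
    ∃ x : Fin t → X, Function.Injective x ∧ Set.range x = W ∧ ∀ h : 0 < t, x ⟨0, h⟩ = c := by
  have ht0 : 0 < t := ht ▸ (Set.ncard_pos W.toFinite).mpr ⟨c, hc⟩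
  let toFin : W ≃ Fin t := Finite.equivFinOfCardEq (Nat.card_coe_set_eq W ▸ ht)
  let enum : Fin t ≃ W := (Equiv.swap ⟨0, ht0⟩ (toFin ⟨c, hc⟩)).trans toFin.symm
  refine ⟨Subtype.val ∘ enum, Subtype.val_injective.comp enum.injective, ?_, fun _ => ?_⟩
  · rw [Set.range_comp, enum.range_eq_univ, Set.image_univ, Subtype.range_coe]
  · simp [enum, Equiv.swap_apply_left]

theorem eq_setOf_of_exists_mem_eqOn_compl {X : Type*} {S : Set (X → X)} {W : Set X} {c : X}
    (hmaps : ∀ β ∈ S, ∀ x, β x ∈ W) (hnull : ∀ β ∈ S, ∀ u ∈ W, β u = c)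
    (hsurj : ∀ f : X → X, (∀ z ∉ W, f z ∈ W) → ∃ β ∈ S, Set.EqOn β f Wᶜ) :
    S = {β | (∀ u ∈ W, β u = c) ∧ ∀ x, β x ∈ W} := by
  refine Set.ext fun β => ⟨fun hβ => ⟨hnull β hβ, hmaps β hβ⟩, fun ⟨hβc, hβW⟩ => ?_⟩
  obtain ⟨γ, hγ, hγβ⟩ := hsurj β fun z _ => hβW z
  have hγβ' : γ = β := funext fun z => by
    by_cases hz : z ∈ W
    · rw [hnull γ hγ z hz, hβc z hz]
    · exact hγβ hz
  exact hγβ' ▸ hγ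

section NullSemigroup

variable {X : Type*} {S : Set (X → X)} {e : X → X}

theorem exists_const_of_two_not_mem_unionRange (hcomm : IsCommSub S) (he : IsZeroElem S e)
    (hsurj : ∀ f : X → X, (∀ z ∉ unionRange S, f z ∈ unionRange S) →
      ∃ β ∈ S, Set.EqOn β f (unionRange S)ᶜ)
    {y y' : X} (hy : y ∉ unionRange S) (hy' : y' ∉ unionRange S) (hne : y ≠ y') :
    ∃ c, e = Function.const X c ∧ ∀ β ∈ S, ∀ u ∈ unionRange S, β u = c := by
  classical
  have hconst : ∀ u ∈ unionRange S, ∃ η ∈ S, (∀ z ∉ unionRange S, η z = u) ∧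
      ∀ a ∈ unionRange S, ∀ b ∈ unionRange S, η a = η b := by
    intro u hu
    obtain ⟨η, hη, hηu⟩ := hsurj (fun _ => u) fun _ _ => hu
    refine ⟨η, hη, fun z hz => hηu hz, fun a ha b hb => ?_⟩
    obtain ⟨β, hβ, hβab⟩ := hsurj (fun z => if z = y then a else b) fun z _ => by
      split_ifs <;> assumption
    have hβy : β y = a := by simpa using hβab hy
    have hβy' : β y' = b := by simpa [hne.symm] using hβab hy'
    calc η a = η (β y) := by rw [hβy]
      _ = β (η y) := (congrFun (hcomm β hβ η hη) y).symm
      _ = β (η y') := by rw [hηu hy, hηu hy']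
      _ = η (β y') := congrFun (hcomm β hβ η hη) y'
      _ = η b := by rw [hβy']
  have he_mem : ∀ x, e x ∈ unionRange S := mem_unionRange he.1
  obtain ⟨η, hη, -, hηW⟩ := hconst (e y) (he_mem y)
  refine ⟨e y, funext fun x => ?_, fun β hβ u hu => ?_⟩
  · calc e x = η (e x) := (he.apply_apply hη x).symm
      _ = η (e y) := hηW _ (he_mem x) _ (he_mem y)
      _ = e y := he.apply_apply hη y
  · obtain ⟨ηu, hηu, hηu_out, hηuW⟩ := hconst u hu
    calc β u = β (ηu y) := by rw [hηu_out y hy]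
      _ = ηu (β y) := congrFun (hcomm β hβ ηu hηu) y
      _ = ηu (e y) := hηuW _ (mem_unionRange hβ y) _ (he_mem y)
      _ = e y := he.apply_apply hηu y

theorem exists_const_of_ncard_unionRange_eq_two (he : IsZeroElem S e)
    (hnil : IsNilpotentSub S e) (hW : (unionRange S).ncard = 2) (hcard : 1 < S.ncard) :
    ∃ c, e = Function.const X c ∧ ∀ β ∈ S, ∀ u ∈ unionRange S, β u = c := by
  have hpair : ∀ a ∈ unionRange S, ∀ b ∈ unionRange S, a ≠ b → unionRange S = {a, b} :=
    fun a ha b hb hab => (Set.eq_of_subset_of_ncard_le (Set.pair_subset ha hb)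
      (by rw [hW, Set.ncard_pair hab]) (Set.finite_of_ncard_ne_zero (by omega))).symm
  have he_mem : ∀ x, e x ∈ unionRange S := mem_unionRange he.1
  obtain ⟨x₀⟩ : Nonempty X := by
    obtain ⟨a, ha⟩ := Set.nonempty_of_ncard_ne_zero (s := unionRange S) (by omega)
    obtain ⟨-, -, x₀, -⟩ := Set.mem_iUnion₂.mp ha
    exact ⟨x₀⟩
  have he_const : ∀ x, e x = e x₀ := by
    by_contra! ⟨x, hx⟩
    have hW' := hpair _ (he_mem x) _ (he_mem x₀) hx
    have hidem : S ⊆ {e} := fun β hβ => hnil.eq_of_idempotent hβ fun z => by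
      have hz := mem_unionRange hβ z
      rw [hW'] at hz
      rcases hz with h | h <;> rw [h, he.apply_apply hβ]
    have := Set.ncard_le_ncard hidem
    simp only [Set.ncard_singleton] at this
    omega
  refine ⟨e x₀, funext he_const, fun β hβ u hu => ?_⟩
  by_cases huc : u = e x₀
  · rw [huc, he.apply_apply hβ]
  · have hβu := mem_unionRange hβ u
    rw [hpair _ hu _ (he_mem x₀) huc] at hβu
    refine hβu.resolve_left fun hfix => huc ?_
    rw [← he_const u, (hnil.isFixedPt_of_isFixedPt hβ hfix).eq]

end NullSemigroup

theorem stmt13_general {X : Type*} [Fintype X] (hX : 3 ≤ Fintype.card X)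
    (S : Set (X → X)) (hcomm : IsCommSub S)
    (e : X → X) (he : IsZeroElem S e) (hnil : IsNilpotentSub S e)
    (hcard : S.ncard = xi (Fintype.card X)) :
    (∃ c : X, e = Function.const X c) ∧
    ∃ (t : ℕ) (x : Fin t → X), t = alphaMax (Fintype.card X) ∧
      Function.Injective x ∧ 1 ≤ t ∧
      S = {β : X → X | (∀ j : Fin t, ∃ h1 : 0 < t, β (x j) = x ⟨0, h1⟩) ∧
            Set.range β ⊆ Set.range x} := by
  rw [← Nat.card_eq_fintype_card] at hX hcard ⊢
  set n := Nat.card X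
  set W := unionRange S
  have hmaps : ∀ β ∈ S, ∀ x, β x ∈ W := fun β hβ => mem_unionRange hβ
  have hdet : ∀ β ∈ S, ∀ γ ∈ S, Set.EqOn β γ Wᶜ → β = γ := fun β hβ γ hγ =>
    eq_of_eqOn_compl_unionRange hcomm he hnil hβ hγ
  obtain ⟨x₀⟩ : Nonempty X := Nat.card_pos_iff.mp (by omega) |>.1
  have hw : 1 ≤ W.ncard := (Set.ncard_pos W.toFinite).mpr ⟨e x₀, hmaps e he.1 x₀⟩
  have hwn : W.ncard ≤ n := Set.ncard_le_card W
  have hmax : W.ncard ^ (n - W.ncard) = xi n := le_antisymm (pow_sub_le_xi hw hwn)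
    (hcard ▸ ncard_le_pow_of_eqOn_compl hmaps hdet)
  have hsurj := exists_mem_eqOn_compl hmaps hdet (hcard.trans hmax.symm)
  obtain ⟨c, rfl, hnull⟩ : ∃ c, e = Function.const X c ∧ ∀ β ∈ S, ∀ u ∈ W, β u = c := by
    rcases two_le_sub_or_of_pow_sub_eq_xi hX hwn hmax with h | ⟨hn, hw2⟩
    · obtain ⟨y, y', hy, hy', hne⟩ := (Set.one_lt_ncard_iff Wᶜ.toFinite).mp (by
        rw [Set.ncard_compl]; omega)
      exact exists_const_of_two_not_mem_unionRange hcomm he hsurj hy hy' hne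
    · exact exists_const_of_ncard_unionRange_eq_two he hnil hw2 (by
        rw [hcard, ← hmax, hn, hw2]; norm_num)
  have hS := eq_setOf_of_exists_mem_eqOn_compl hmaps hnull hsurj
  generalize ht : W.ncard = t at hw hwn hmax
  obtain ⟨x, hx, hrange, hx0⟩ := exists_injective_fin_range_eq ht (hmaps _ he.1 x₀)
  refine ⟨⟨c, rfl⟩, t, x, eq_alphaMax_of_pow_sub_eq_xi hX hw hwn hmax, hx, hw, ?_⟩
  clear_value W
  subst hrange
  rw [hS]
  ext β
  simp [Set.range_subset_iff, hx0, show 0 < t from hw]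

theorem stmt13 {X : Type*} [Fintype X] (hX : 3 ≤ Fintype.card X)
    (S : Set (X → X)) (hS : IsTransSub S) (hcomm : IsCommSub S)
    (e : X → X) (he : IsZeroElem S e) (hnil : IsNilpotentSub S e)
    (hcard : S.ncard = xi (Fintype.card X)) :
    (∃ c : X, e = Function.const X c) ∧
    ∃ (t : ℕ) (x : Fin t → X), t = alphaMax (Fintype.card X) ∧
      Function.Injective x ∧ 1 ≤ t ∧
      S = {β : X → X | (∀ j : Fin t, ∃ h1 : 0 < t, β (x j) = x ⟨0, h1⟩) ∧
            Set.range β ⊆ Set.range x} :=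
  stmt13_general hX S hcomm e he hnil hcard
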